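/- There exists a constant C > 0 such that for all t with 0 < t ≤ π/4 and all x, y ∈ ℝ with x ≠ y, |∫_0^1 λ^{−1/2} ∂_y K_t(x,y,λ) · e^{iB_t(x,y,λ)} dλ| ≤ C·|x − y|^{−2}. -/

import Mathlib

open MeasureTheory Real

/-- `D = sinh²(2λ) + sin²(2t)`. -/
noncomputable def Dfun (t l : ℝ) : ℝ := Real.sinh (2*l)^2 + Real.sin (2*t)^2

/-- `2A_t(x,y,λ) = D^{−1} sinh(2λ) {cos(2t)(x−y)² + (cosh 2λ − cos 2t)(x² + y²)}`. -/
noncomputable def Afun (t x y l : ℝ) : ℝ :=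
  (Real.sinh (2*l) * (Real.cos (2*t) * (x - y)^2
    + (Real.cosh (2*l) - Real.cos (2*t)) * (x^2 + y^2))) / (2 * Dfun t l)

/-- `2B_t(x,y,λ) = −D^{−1} sinh(2t) {cosh(2λ)(x−y)² − (cosh 2λ − cos 2t)(x² + y²)}`. -/
noncomputable def Bfun (t x y l : ℝ) : ℝ :=
  -(Real.sinh (2*t) * (Real.cosh (2*l) * (x - y)^2
    - (Real.cosh (2*l) - Real.cos (2*t)) * (x^2 + y^2))) / (2 * Dfun t l)

/-- `K_t(x,y,λ) = (sinh(2(λ − it)))^{−1} e^{−A_t(x,y,λ)}`. -/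
noncomputable def Kfun (t x y l : ℝ) : ℂ :=
  (Complex.sinh (2 * ((l:ℂ) - Complex.I * (t:ℂ))))⁻¹ * Complex.exp (-(Afun t x y l : ℂ))

set_option maxHeartbeats 1000000
open intervalIntegral


lemma my_le_exp (x : ℝ) : x ≤ Real.exp x := by
  nlinarith [Real.add_one_le_exp x]

lemma my_sqrt_le_exp_half {v : ℝ} (hv : 0 ≤ v) : Real.sqrt v ≤ Real.exp (v/2) := by
  have h1 : Real.sqrt v ≤ Real.sqrt (Real.exp v) := Real.sqrt_le_sqrt (my_le_exp v)
  have h2 : Real.sqrt (Real.exp v) = Real.exp (v/2) := by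
    rw [show Real.exp v = (Real.exp (v/2))^2 by rw [sq, ← Real.exp_add]; norm_num,
      Real.sqrt_sq (Real.exp_pos _).le]
  linarith

lemma my_exp_neg_le_inv {x : ℝ} (hx : 0 < x) : Real.exp (-x) ≤ x⁻¹ := by
  rw [Real.exp_neg]
  exact inv_anti₀ hx (my_le_exp x)

lemma my_exp_neg_le_inv_sqrt {x : ℝ} (hx : 0 < x) : Real.exp (-x) ≤ (Real.sqrt x)⁻¹ := by
  rw [Real.exp_neg]
  apply inv_anti₀ (Real.sqrt_pos.mpr hx)
  calc Real.sqrt x ≤ Real.exp (x/2) := my_sqrt_le_exp_half hx.le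
    _ ≤ Real.exp x := by apply Real.exp_le_exp.mpr; linarith

/-- `e^{-v} ≤ 2/(v √v)` for `v > 0`. -/
lemma my_exp_neg_le_two_div {v : ℝ} (hv : 0 < v) :
    Real.exp (-v) ≤ 2 / (v * Real.sqrt v) := by
  have h1 : v ≤ 2 * Real.exp (v/2) := by nlinarith [my_le_exp (v/2), Real.exp_pos (v/2)]
  have h2 : Real.sqrt v ≤ Real.exp (v/2) := my_sqrt_le_exp_half hv.le
  have h3 : v * Real.sqrt v ≤ 2 * Real.exp v := by
    calc v * Real.sqrt v ≤ (2 * Real.exp (v/2)) * Real.exp (v/2) := by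
          apply mul_le_mul h1 h2 (Real.sqrt_nonneg v) (by positivity)
      _ = 2 * Real.exp v := by rw [mul_assoc, ← Real.exp_add]; ring_nf
  rw [Real.exp_neg]
  rw [inv_le_iff_one_le_mul₀ (Real.exp_pos v)]
  rw [div_mul_eq_mul_div, le_div_iff₀ (by positivity)]
  linarith

/-- `u e^{-u} ≤ 1`, in the form `l e^{-al} ≤ 2/a · e^{... }` step helper:
for `a > 0`, `l ≥ 0`: `l * exp (-(a*l)) ≤ (2/a) * exp (-(a/2*l))`. -/
lemma my_linear_exp {a l : ℝ} (ha : 0 < a) (hl : 0 ≤ l) :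
    l * Real.exp (-(a*l)) ≤ (2/a) * Real.exp (-(a/2*l)) := by
  have h : l * Real.exp (-(a/2*l)) ≤ 2/a := by
    have := my_le_exp (a/2*l)
    have h2 : Real.exp (-(a/2*l)) * Real.exp (a/2*l) = 1 := by
      rw [← Real.exp_add]; simp
    have hp := Real.exp_pos (-(a/2*l))
    have h3 : (a/2*l) * Real.exp (-(a/2*l)) ≤ 1 := by
      nlinarith [mul_le_mul_of_nonneg_right this hp.le]
    rw [le_div_iff₀ ha]
    nlinarith
  calc l * Real.exp (-(a*l)) = (l * Real.exp (-(a/2*l))) * Real.exp (-(a/2*l)) := by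
        rw [mul_assoc, ← Real.exp_add]; ring_nf
    _ ≤ (2/a) * Real.exp (-(a/2*l)) := by
        apply mul_le_mul_of_nonneg_right h (Real.exp_pos _).le

section INT
open intervalIntegral


lemma my_int_rpow : ∫ l in (0:ℝ)..1, l ^ (-(1:ℝ)/2) = 2 := by
  rw [integral_rpow (Or.inl (by norm_num))]
  norm_num

lemma my_intable_rpow : IntervalIntegrable (fun l : ℝ => l ^ (-(1:ℝ)/2)) volume 0 1 :=
  intervalIntegrable_rpow' (by norm_num)

lemma my_intable_rpow_exp {a : ℝ} : IntervalIntegrable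
    (fun l : ℝ => l ^ (-(1:ℝ)/2) * Real.exp (-(a*l))) volume 0 1 :=
  my_intable_rpow.mul_continuousOn (by fun_prop)

lemma my_int_exp {a u v : ℝ} (ha : 0 < a) :
    ∫ l in u..v, Real.exp (-(a*l)) = (Real.exp (-(a*u)) - Real.exp (-(a*v)))/a := by
  have h : ∀ l : ℝ, HasDerivAt (fun w => -(a⁻¹) * Real.exp (-(a*w))) (Real.exp (-(a*l))) l := by
    intro l
    have h1 : HasDerivAt (fun w : ℝ => -(a*w)) (-a) l := by
      exact (((hasDerivAt_id l).const_mul a).neg).congr_deriv (by simp)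
    have := (h1.exp).const_mul (-(a⁻¹))
    exact this.congr_deriv (by rw [mul_comm (Real.exp _) (-a), ← mul_assoc, neg_mul_neg, inv_mul_cancel₀ ha.ne', one_mul])
  rw [integral_eq_sub_of_hasDerivAt (fun l _ => h l) ((Continuous.intervalIntegrable (by fun_prop) _ _))]
  field_simp
  ring

lemma my_L2 {a : ℝ} (ha : 0 < a) :
    ∫ l in (0:ℝ)..1, l ^ (-(1:ℝ)/2) * Real.exp (-(a*l)) ≤ 3 / Real.sqrt a := by
  have hsa : 0 < Real.sqrt a := Real.sqrt_pos.mpr ha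
  have hptw : ∀ l ∈ Set.Icc (0:ℝ) 1, l ^ (-(1:ℝ)/2) * Real.exp (-(a*l)) ≤ l ^ (-(1:ℝ)/2) := by
    intro l hl
    have h1 : Real.exp (-(a*l)) ≤ 1 := by
      rw [Real.exp_le_one_iff]; nlinarith [hl.1]
    nlinarith [Real.rpow_nonneg hl.1 (-(1:ℝ)/2), Real.exp_pos (-(a*l))]
  rcases le_or_gt a 1 with hc | hc
  · have h2 : Real.sqrt a ≤ 1 := by
      rw [show (1:ℝ) = Real.sqrt 1 by simp]; exact Real.sqrt_le_sqrt hc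
    have : ∫ l in (0:ℝ)..1, l ^ (-(1:ℝ)/2) * Real.exp (-(a*l)) ≤ 2 := by
      calc ∫ l in (0:ℝ)..1, l ^ (-(1:ℝ)/2) * Real.exp (-(a*l))
          ≤ ∫ l in (0:ℝ)..1, l ^ (-(1:ℝ)/2) :=
            integral_mono_on (by norm_num) my_intable_rpow_exp my_intable_rpow hptw
        _ = 2 := my_int_rpow
    calc _ ≤ (2:ℝ) := this
      _ ≤ 3 / Real.sqrt a := by rw [le_div_iff₀ hsa]; nlinarith
  · have hainv : (0:ℝ) < a⁻¹ := by positivity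
    have hainv1 : a⁻¹ ≤ 1 := by
      rw [inv_le_one_iff₀]; right; linarith
    have hsub1 : Set.uIcc (0:ℝ) a⁻¹ ⊆ Set.uIcc (0:ℝ) 1 := by
      rw [Set.uIcc_of_le hainv.le, Set.uIcc_of_le (by norm_num)]
      exact Set.Icc_subset_Icc le_rfl hainv1
    have hsub2 : Set.uIcc a⁻¹ (1:ℝ) ⊆ Set.uIcc (0:ℝ) 1 := by
      rw [Set.uIcc_of_le hainv1, Set.uIcc_of_le (by norm_num)]
      exact Set.Icc_subset_Icc hainv.le le_rfl
    have hi1 := my_intable_rpow_exp (a := a).mono_set hsub1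
    have hi2 := my_intable_rpow_exp (a := a).mono_set hsub2
    rw [← integral_add_adjacent_intervals hi1 hi2]
    have hpart1 : ∫ l in (0:ℝ)..a⁻¹, l ^ (-(1:ℝ)/2) * Real.exp (-(a*l)) ≤ 2 / Real.sqrt a := by
      have hmono : ∫ l in (0:ℝ)..a⁻¹, l ^ (-(1:ℝ)/2) * Real.exp (-(a*l))
          ≤ ∫ l in (0:ℝ)..a⁻¹, l ^ (-(1:ℝ)/2) := by
        apply integral_mono_on hainv.le hi1 (my_intable_rpow.mono_set hsub1)
        intro l hl
        exact hptw l ⟨hl.1, le_trans hl.2 hainv1⟩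
      have hval : ∫ l in (0:ℝ)..a⁻¹, l ^ (-(1:ℝ)/2) = 2 * Real.sqrt a⁻¹ := by
        rw [integral_rpow (Or.inl (by norm_num)), Real.sqrt_eq_rpow]
        norm_num
        ring
      rw [hval, Real.sqrt_inv] at hmono
      calc _ ≤ 2 * (Real.sqrt a)⁻¹ := hmono
        _ = 2 / Real.sqrt a := by ring
    have hpart2 : ∫ l in a⁻¹..1, l ^ (-(1:ℝ)/2) * Real.exp (-(a*l)) ≤ 1 / Real.sqrt a := by
      have hmono : ∫ l in a⁻¹..1, l ^ (-(1:ℝ)/2) * Real.exp (-(a*l))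
          ≤ ∫ l in a⁻¹..1, Real.sqrt a * Real.exp (-(a*l)) := by
        apply integral_mono_on hainv1 hi2 ((Continuous.intervalIntegrable (by fun_prop) _ _))
        intro l hl
        have hl0 : 0 < l := lt_of_lt_of_le hainv hl.1
        have hrp : l ^ (-(1:ℝ)/2) ≤ Real.sqrt a := by
          rw [show (-(1:ℝ)/2) = -((1:ℝ)/2) by norm_num, Real.rpow_neg hl0.le,
            ← Real.sqrt_eq_rpow]
          have h3 : Real.sqrt a⁻¹ ≤ Real.sqrt l := Real.sqrt_le_sqrt hl.1
          rw [Real.sqrt_inv] at h3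
          calc (Real.sqrt l)⁻¹ ≤ ((Real.sqrt a)⁻¹)⁻¹ :=
                inv_anti₀ (by positivity) h3
            _ = Real.sqrt a := inv_inv _
        exact mul_le_mul_of_nonneg_right hrp (Real.exp_pos _).le
      rw [intervalIntegral.integral_const_mul, my_int_exp ha] at hmono
      have : Real.sqrt a * ((Real.exp (-(a*a⁻¹)) - Real.exp (-(a*1)))/a) ≤ 1 / Real.sqrt a := by
        rw [mul_comm, div_mul_eq_mul_div, div_le_div_iff₀ (by positivity) hsa]
        have hex : Real.exp (-(a*a⁻¹)) - Real.exp (-(a*1)) ≤ 1 := by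
          nlinarith [Real.exp_pos (-(a*1)), Real.exp_le_one_iff.mpr
            (show -(a*a⁻¹) ≤ 0 by rw [mul_inv_cancel₀ ha.ne']; norm_num)]
        have hsq : Real.sqrt a * Real.sqrt a = a := Real.mul_self_sqrt ha.le
        nlinarith [Real.exp_pos (-(a*a⁻¹)), Real.exp_pos (-(a*1)), hsa]
      linarith
    have hsum : 2/Real.sqrt a + 1/Real.sqrt a = 3/Real.sqrt a := by ring
    linarith

lemma my_G_bound {b : ℝ} (hb : 0 < b) : ∀ l ∈ Set.Ioc (0:ℝ) 1,
    (l⁻¹)^2 * Real.exp (-(b * l⁻¹)) ≤ 4 / b^2 := by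
  intro l hl
  have hl0 : 0 < l := hl.1
  have hinv : 0 < l⁻¹ := by positivity
  have h1 : (b*l⁻¹)/2 ≤ Real.exp ((b*l⁻¹)/2) := my_le_exp _
  have h2 : Real.exp ((b*l⁻¹)/2) * Real.exp (-(b * l⁻¹)) ≤ Real.exp (-(b*l⁻¹)/2) := by
    rw [← Real.exp_add]; apply Real.exp_le_exp.mpr; linarith
  have h3 : (b*l⁻¹)^2 * Real.exp (-(b*l⁻¹)) ≤ 4 := by
    have e1 : Real.exp ((b*l⁻¹)/2) * Real.exp (-(b*l⁻¹)/2) = 1 := by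
      rw [← Real.exp_add, show (b*l⁻¹)/2 + -(b*l⁻¹)/2 = 0 by ring, Real.exp_zero]
    nlinarith [Real.exp_pos (-(b*l⁻¹)), Real.exp_pos ((b*l⁻¹)/2),
      Real.exp_pos (-(b*l⁻¹)/2),
      mul_le_mul h1 h1 (by positivity) (Real.exp_pos _).le,
      mul_le_mul_of_nonneg_right (mul_le_mul h1 h1 (by positivity) (Real.exp_pos _).le)
        (Real.exp_pos (-(b*l⁻¹))).le]
  have hb2 : 0 < b^2 := by positivity
  rw [div_eq_mul_inv, ← mul_le_mul_iff_of_pos_left hb2]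
  calc b^2 * ((l⁻¹)^2 * Real.exp (-(b * l⁻¹))) = (b*l⁻¹)^2 * Real.exp (-(b*l⁻¹)) := by ring
    _ ≤ 4 := h3
    _ = b^2 * (4 * (b^2)⁻¹) := by field_simp

end INT

lemma my_contOn_G {b : ℝ} : ContinuousOn
    (fun l : ℝ => (l⁻¹)^2 * Real.exp (-(b * l⁻¹))) (Set.Ioc 0 1) := by
  have hcinv : ContinuousOn (fun l : ℝ => l⁻¹) (Set.Ioc (0:ℝ) 1) := fun l hl =>
    (continuousAt_inv₀ (ne_of_gt hl.1)).continuousWithinAt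
  exact (hcinv.pow 2).mul (Real.continuous_exp.comp_continuousOn ((continuousOn_const.mul hcinv).neg))

lemma my_intable_G {b : ℝ} (hb : 0 < b) :
    IntervalIntegrable (fun l : ℝ => (l⁻¹)^2 * Real.exp (-(b * l⁻¹))) volume 0 1 := by
  rw [intervalIntegrable_iff_integrableOn_Ioc_of_le (by norm_num)]
  apply Integrable.mono' (g := fun _ => 4/b^2) (integrable_const _)
  · exact my_contOn_G.aestronglyMeasurable measurableSet_Ioc
  · rw [ae_restrict_iff' measurableSet_Ioc]
    apply ae_of_all
    intro l hl
    rw [Real.norm_eq_abs, abs_of_nonneg (by positivity)]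
    exact my_G_bound hb l hl

lemma my_L3 {b : ℝ} (hb : 0 < b) :
    ∫ l in (0:ℝ)..1, (l⁻¹)^2 * Real.exp (-(b * l⁻¹)) ≤ 1/b := by
  set F : ℝ → ℝ := fun l => if l = 0 then 0 else Real.exp (-(b * l⁻¹)) with hF
  have hFeq : ∀ l : ℝ, l ≠ 0 → F =ᶠ[nhds l] (fun w => Real.exp (-(b*w⁻¹))) := by
    intro l hl0
    filter_upwards [isOpen_compl_singleton.mem_nhds
      (by simpa using hl0 : l ∈ ({0}ᶜ : Set ℝ))] with w hw
    simp only [hF, if_neg (by simpa using hw)]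
  have hcont : ContinuousOn F (Set.Icc 0 1) := by
    intro l hl
    by_cases hl0 : l = 0
    · subst hl0
      have hF0 : F 0 = 0 := by simp [hF]
      unfold ContinuousWithinAt
      rw [hF0]
      apply tendsto_of_tendsto_of_tendsto_of_le_of_le'
        (g := fun _ : ℝ => (0:ℝ)) (h := fun w : ℝ => w/b)
      · exact tendsto_const_nhds
      · have : Filter.Tendsto (fun w : ℝ => w/b) (nhds 0) (nhds 0) := by
          simpa using (continuous_id.div_const b).tendsto 0
        exact this.mono_left nhdsWithin_le_nhds
      · filter_upwards [eventually_mem_nhdsWithin] with w hw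
        by_cases hw0 : w = 0
        · simp [hF, hw0]
        · simp only [hF, if_neg hw0]; positivity
      · filter_upwards [eventually_mem_nhdsWithin] with w hw
        by_cases hw0 : w = 0
        · simp [hF, hw0]
        · simp only [hF, if_neg hw0]
          have hw1 : 0 < w := lt_of_le_of_ne hw.1 (Ne.symm hw0)
          calc Real.exp (-(b*w⁻¹)) ≤ (b*w⁻¹)⁻¹ := my_exp_neg_le_inv (by positivity)
            _ = w/b := by field_simp
    · have hg : ContinuousAt (fun w : ℝ => Real.exp (-(b*w⁻¹))) l :=
        Real.continuous_exp.continuousAt.comp (((continuousAt_inv₀ hl0).const_mul b).neg)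
      exact (hg.congr (hFeq l hl0).symm).continuousWithinAt
  have hderiv : ∀ l ∈ Set.Ioo (0:ℝ) 1,
      HasDerivWithinAt F (b * ((l⁻¹)^2 * Real.exp (-(b*l⁻¹)))) (Set.Ioi l) l := by
    intro l hl
    have hl0 : l ≠ 0 := ne_of_gt hl.1
    have hg : HasDerivAt (fun w : ℝ => Real.exp (-(b*w⁻¹)))
        (b * ((l⁻¹)^2 * Real.exp (-(b*l⁻¹)))) l := by
      have hinner : HasDerivAt (fun w : ℝ => -(b*w⁻¹)) (-(b * -(l^2)⁻¹)) l :=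
        ((hasDerivAt_inv hl0).const_mul b).neg
      convert hinner.exp using 1
      rw [inv_pow]; ring
    have hgF : HasDerivAt F (b * ((l⁻¹)^2 * Real.exp (-(b*l⁻¹)))) l :=
      hg.congr_of_eventuallyEq (hFeq l hl0)
    exact hgF.hasDerivWithinAt
  have hint : IntervalIntegrable (fun l : ℝ => b * ((l⁻¹)^2*Real.exp (-(b*l⁻¹)))) volume 0 1 :=
    (my_intable_G hb).const_mul b
  have heq := integral_eq_sub_of_hasDeriv_right_of_le (by norm_num) hcont hderiv hint
  rw [intervalIntegral.integral_const_mul] at heq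
  have hF1 : F 1 = Real.exp (-b) := by norm_num [hF]
  have hF0 : F 0 = 0 := by simp [hF]
  rw [hF1, hF0, sub_zero] at heq
  rw [le_div_iff₀ hb]
  have hexp : Real.exp (-b) ≤ 1 := Real.exp_le_one_iff.mpr (by linarith)
  nlinarith [heq]


lemma my_sinh_le (x : ℝ) (hx : 0 ≤ x) : Real.sinh x ≤ x * Real.exp (2*x) := by
  rw [Real.sinh_eq]
  have e1 : Real.exp (-x) * Real.exp x = 1 := by rw [← Real.exp_add]; norm_num
  have e2 : Real.exp (-(2*x)) * Real.exp (2*x) = 1 := by rw [← Real.exp_add]; norm_num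
  have e3 : Real.exp (-x) * Real.exp (2*x) = Real.exp x := by
    rw [← Real.exp_add]; ring_nf
  have h1 : Real.exp (-x) ≤ 1 := Real.exp_le_one_iff.mpr (by linarith)
  have h2 : 1 + -(2*x) ≤ Real.exp (-(2*x)) := by nlinarith [Real.add_one_le_exp (-(2*x))]
  have h3 : 1 ≤ Real.exp (2*x) := Real.one_le_exp (by linarith)
  have h4 : Real.exp (2*x) - 1 ≤ 2*x*Real.exp (2*x) := by
    nlinarith [mul_le_mul_of_nonneg_left h2 (Real.exp_pos (2*x)).le]
  have h5 : Real.exp x - Real.exp (-x) ≤ Real.exp (2*x) - 1 := by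
    nlinarith [mul_le_mul_of_nonneg_right h1 (show (0:ℝ) ≤ Real.exp (2*x) - 1 by linarith)]
  linarith

lemma my_exp_four : Real.exp 4 ≤ 55 := by
  have h : Real.exp 4 = (Real.exp 1)^4 := by
    rw [← Real.exp_nat_mul]; norm_num
  have h2 : (Real.exp 1)^4 ≤ (2.7182818286:ℝ)^4 := by
    apply pow_le_pow_left₀ (Real.exp_pos 1).le Real.exp_one_lt_d9.le
  nlinarith

lemma my_sinh_upper {l : ℝ} (hl0 : 0 < l) (hl1 : l ≤ 1) : Real.sinh (2*l) ≤ 110*l := by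
  have h1 := my_sinh_le (2*l) (by linarith)
  have h2 : Real.exp (2*(2*l)) ≤ Real.exp 4 := Real.exp_le_exp.mpr (by linarith)
  nlinarith [my_exp_four, Real.exp_pos (2*(2*l))]

lemma my_cosh_upper {l : ℝ} (hl0 : 0 < l) (hl1 : l ≤ 1) : Real.cosh (2*l) ≤ 5 := by
  have h1 : Real.cosh (2*l) ≤ Real.cosh 2 := by
    rw [Real.cosh_le_cosh]
    rw [abs_of_pos (by linarith), abs_of_pos (by norm_num)]
    linarith
  have h2 : Real.cosh 2 = (Real.exp 2 + Real.exp (-2))/2 := Real.cosh_eq 2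
  have h3 : Real.exp 2 = (Real.exp 1)^2 := by rw [← Real.exp_nat_mul]; norm_num
  have h4 : (Real.exp 1)^2 ≤ (2.7182818286:ℝ)^2 :=
    pow_le_pow_left₀ (Real.exp_pos 1).le Real.exp_one_lt_d9.le 2
  have h5 : Real.exp (-2) ≤ 1 := Real.exp_le_one_iff.mpr (by norm_num)
  nlinarith

noncomputable def dAfun (t x y l : ℝ) : ℝ :=
  Real.sinh (2*l) * (Real.cos (2*t) * (y-x) + (Real.cosh (2*l) - Real.cos (2*t)) * y) / Dfun t l

lemma my_sinh_norm (t l : ℝ) :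
    ‖Complex.sinh (2 * ((l:ℂ) - Complex.I * (t:ℂ)))‖ = Real.sqrt (Dfun t l) := by
  have harg : 2 * ((l:ℂ) - Complex.I * (t:ℂ))
      = ((2*l : ℝ) : ℂ) + ((-(2*t) : ℝ) : ℂ) * Complex.I := by
    push_cast; ring
  rw [harg, Complex.sinh_add, Complex.sinh_mul_I, Complex.cosh_mul_I]
  rw [← Complex.ofReal_sinh, ← Complex.ofReal_cosh, ← Complex.ofReal_cos, ← Complex.ofReal_sin]
  rw [show ((Real.sinh (2*l) : ℝ) : ℂ) * ((Real.cos (-(2*t)) : ℝ) : ℂ)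
      + ((Real.cosh (2*l) : ℝ):ℂ) * (((Real.sin (-(2*t)) : ℝ):ℂ) * Complex.I)
      = ((Real.sinh (2*l) * Real.cos (-(2*t)) : ℝ) : ℂ)
      + ((Real.cosh (2*l) * Real.sin (-(2*t)) : ℝ):ℂ) * Complex.I by push_cast; ring]
  rw [Complex.norm_def, Complex.normSq_add_mul_I]
  unfold Dfun
  congr 1
  have h1 := Real.sin_sq_add_cos_sq (2*t)
  have h2 := Real.cosh_sq (2*l)
  rw [Real.cos_neg, Real.sin_neg]
  nlinarith [h1, h2]

lemma my_hasDerivAt_Afun (t x l y : ℝ) (hD : Dfun t l ≠ 0) :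
    HasDerivAt (fun v => Afun t x v l) (dAfun t x y l) y := by
  have h1 : HasDerivAt (fun v : ℝ => (x - v)^2) (2*(x-y)^1*(-1)) y := by
    exact (((hasDerivAt_id y).const_sub x).pow 2).congr_deriv (by simp)
  have h2 : HasDerivAt (fun v : ℝ => x^2 + v^2) (2*y^1) y := by
    simpa using ((hasDerivAt_pow 2 y).const_add (x^2))
  have h3 := ((h1.const_mul (Real.cos (2*t))).add
    (h2.const_mul (Real.cosh (2*l) - Real.cos (2*t)))).const_mul (Real.sinh (2*l))
  have h4 := h3.div_const (2 * Dfun t l)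
  refine h4.congr_deriv ?_
  unfold dAfun
  field_simp
  ring

lemma my_deriv_K (t x l y : ℝ) (hD : Dfun t l ≠ 0) :
    deriv (fun v => Kfun t x v l) y
      = Kfun t x y l * (-(dAfun t x y l : ℝ) : ℂ) := by
  have hA := my_hasDerivAt_Afun t x l y hD
  have h1 : HasDerivAt (fun v : ℝ => Complex.exp (-((Afun t x v l : ℝ) : ℂ)))
      (Complex.exp (-((Afun t x y l : ℝ) : ℂ)) * (-(dAfun t x y l : ℝ) : ℂ)) y := by
    have h0 : HasDerivAt (fun v : ℝ => -((Afun t x v l : ℝ) : ℂ))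
        ((-(dAfun t x y l : ℝ) : ℂ)) y := by
      exact hA.ofReal_comp.neg
    simpa [mul_comm] using h0.cexp
  have h2 := h1.const_mul ((Complex.sinh (2 * ((l:ℂ) - Complex.I * (t:ℂ))))⁻¹)
  have h3 : deriv (fun v => Kfun t x v l)  y =
      (Complex.sinh (2 * ((l:ℂ) - Complex.I * (t:ℂ))))⁻¹ *
        (Complex.exp (-((Afun t x y l : ℝ) : ℂ)) * (-(dAfun t x y l : ℝ) : ℂ)) := by
    exact h2.deriv
  rw [h3]
  unfold Kfun
  ring

lemma my_norm_K (t x y l : ℝ) :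
    ‖Kfun t x y l‖ = (Real.sqrt (Dfun t l))⁻¹ * Real.exp (-(Afun t x y l)) := by
  unfold Kfun
  rw [norm_mul, norm_inv, my_sinh_norm]
  congr 1
  rw [Complex.norm_exp]
  simp



lemma my_norm_integrand (t x y l : ℝ) (hD : Dfun t l ≠ 0) (hl0 : 0 < l) :
    ‖((l ^ (-(1:ℝ)/2) : ℝ) : ℂ) * deriv (fun v => Kfun t x v l) y *
        Complex.exp (Complex.I * (Bfun t x y l : ℂ))‖
      = l ^ (-(1:ℝ)/2) * ((Real.sqrt (Dfun t l))⁻¹ *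
          (Real.exp (-(Afun t x y l)) * |dAfun t x y l|)) := by
  rw [norm_mul, norm_mul, my_deriv_K t x l y hD, norm_mul, my_norm_K]
  have h1 : ‖((l ^ (-(1:ℝ)/2) : ℝ) : ℂ)‖ = l ^ (-(1:ℝ)/2) := by
    rw [Complex.norm_real, Real.norm_eq_abs, abs_of_nonneg (Real.rpow_nonneg hl0.le _)]
  have h2 : ‖Complex.exp (Complex.I * (Bfun t x y l : ℂ))‖ = 1 := by
    rw [Complex.norm_exp]; simp
  have h3 : ‖(-((dAfun t x y l : ℝ) : ℂ))‖ = |dAfun t x y l| := by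
    rw [norm_neg, Complex.norm_real, Real.norm_eq_abs]
  rw [h1, h2, h3]; ring

lemma my_c_half {σ c : ℝ} (hsc : σ^2 + c^2 = 1) (hcase : σ^2 < 1/2) (hc0 : 0 ≤ c) :
    1/2 ≤ c := by nlinarith

lemma my_m_facts {s ch c σ m Dv : ℝ} (hch2 : ch^2 = s^2+1) (hch1 : 1 ≤ ch) (hch5 : ch ≤ 5)
    (hc0 : 0 ≤ c) (hc1 : c ≤ 1) (hsc : σ^2 + c^2 = 1)
    (hm : m = ch - c) (hDv : Dv = s^2 + σ^2) :
    0 ≤ m ∧ m ≤ 5 ∧ m ≤ Dv ∧ Dv ≤ 8*m := by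
  have h1 : ch - 1 ≤ s^2/2 := by
    nlinarith [mul_nonneg (show (0:ℝ) ≤ ch - 1 by linarith) (show (0:ℝ) ≤ ch - 1 by linarith)]
  have h2 : 1 - c ≤ σ^2 := by
    nlinarith [mul_nonneg (show (0:ℝ) ≤ 1 - c by linarith) hc0]
  have h3 : s^2/6 ≤ ch - 1 := by
    nlinarith [mul_le_mul_of_nonneg_left (show ch+1 ≤ 6 by linarith)
      (show (0:ℝ) ≤ ch-1 by linarith)]
  have h4 : σ^2/2 ≤ 1 - c := by
    nlinarith [mul_le_mul_of_nonneg_left (show c+1 ≤ 2 by linarith)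
      (show (0:ℝ) ≤ 1-c by linarith)]
  refine ⟨by linarith, by linarith, by nlinarith, by nlinarith⟩

lemma my_dA_abs {s c m Dv x y r ρ : ℝ} (hs0 : 0 < s) (hDv0 : 0 < Dv) (hc0 : 0 ≤ c)
    (hm0 : 0 ≤ m) (hr : r = |x - y|) (hy : |y| ≤ ρ) :
    |s * (c*(y-x) + m*y) / Dv| ≤ s*(c*r + m*ρ)/Dv := by
  rw [abs_div, abs_of_pos hDv0, abs_mul, abs_of_pos hs0]
  rw [div_le_div_iff₀ hDv0 hDv0]
  apply mul_le_mul_of_nonneg_right _ hDv0.le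
  apply mul_le_mul_of_nonneg_left _ hs0.le
  calc |c*(y-x) + m*y| ≤ |c*(y-x)| + |m*y| := abs_add_le _ _
    _ = c*|y-x| + m*|y| := by rw [abs_mul, abs_mul, abs_of_nonneg hc0, abs_of_nonneg hm0]
    _ ≤ c*r + m*ρ := by
        have e : |y - x| = r := by rw [hr, abs_sub_comm]
        rw [e]
        exact add_le_add le_rfl (mul_le_mul_of_nonneg_left hy hm0)

lemma my_A2_lb {s m Dv ρ2 l a0 : ℝ} (hDv0 : 0 < Dv) (hs : 2*l ≤ s) (hm8 : Dv ≤ 8*m)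
    (hl0 : 0 < l) (hρ20 : 0 < ρ2) (ha0 : a0 = ρ2/8) :
    a0*l ≤ s*m*ρ2/(2*Dv) := by
  rw [le_div_iff₀ (by linarith)]
  have h1 : (2*l)*(Dv/8) ≤ s*m := by
    apply mul_le_mul hs (by linarith) (by linarith) (by linarith)
  have h2 := mul_le_mul_of_nonneg_right h1 hρ20.le
  rw [ha0]
  nlinarith [h2]

lemma my_A1_lb_B1 {s c r2 Dv σ l a1 : ℝ} (hl0 : 0 < l) (hs : 2*l ≤ s) (hc : 1/2 ≤ c)
    (hDv0 : 0 < Dv) (hDv2 : Dv ≤ 2*σ^2) (hσ0 : 0 < σ) (hr20 : 0 < r2)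
    (ha1 : a1 = r2/(4*σ^2)) :
    a1*l ≤ s*c*r2/(2*Dv) := by
  have e : a1*l = (r2*l)/(4*σ^2) := by rw [ha1]; ring
  rw [e, div_le_div_iff₀ (by positivity) (by linarith)]
  have h1 : l ≤ s*c := by nlinarith [mul_le_mul hs hc (by norm_num) (by linarith)]
  have h2 : (r2*l)*(2*Dv) ≤ (r2*l)*(4*σ^2) := by
    apply mul_le_mul_of_nonneg_left (by linarith) (by positivity)
  calc (r2*l)*(2*Dv) ≤ (r2*l)*(4*σ^2) := h2
    _ ≤ (r2*(s*c))*(4*σ^2) := by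
        apply mul_le_mul_of_nonneg_right _ (by positivity)
        exact mul_le_mul_of_nonneg_left h1 hr20.le
    _ = s*c*r2*(4*σ^2) := by ring

lemma my_A1_lb_B2 {s c r2 Dv l b1 : ℝ} (hl0 : 0 < l) (hs2 : 2*l ≤ s) (hs110 : s ≤ 110*l)
    (hc : 1/2 ≤ c) (hDv0 : 0 < Dv) (hDv2 : Dv ≤ 2*s^2) (hr20 : 0 < r2)
    (hb1 : b1 = r2/1024) :
    b1*l⁻¹ ≤ s*c*r2/(2*Dv) := by
  have hs0 : 0 < s := by linarith
  have e : b1*l⁻¹ = r2/(1024*l) := by rw [hb1]; field_simp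
  rw [e, div_le_div_iff₀ (by positivity) (by linarith)]
  have h1 : s*s ≤ 110*l*s := mul_le_mul_of_nonneg_right hs110 hs0.le
  have h2 : r2*(2*Dv) ≤ r2*(4*(s*s)) := by
    apply mul_le_mul_of_nonneg_left _ hr20.le
    nlinarith
  have h3 : r2*(4*(s*s)) ≤ r2*(440*(l*s)) := by
    apply mul_le_mul_of_nonneg_left _ hr20.le
    nlinarith
  have h4 : (0:ℝ) ≤ l*s*r2 := by positivity
  nlinarith [h2, h3, h4, mul_le_mul_of_nonneg_right
    (show (1:ℝ)/2 ≤ c from hc) (show (0:ℝ) ≤ 1024*(l*s*r2) by positivity)]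

lemma my_rpow_half {l : ℝ} (hl0 : 0 < l) : l ^ (-(1:ℝ)/2) = (Real.sqrt l)⁻¹ := by
  rw [show (-(1:ℝ)/2) = -((1:ℝ)/2) by norm_num, Real.rpow_neg hl0.le, ← Real.sqrt_eq_rpow]

lemma my_caseA_bound {l s σ c m Dv q r ρ a0 A dAa KA : ℝ}
    (hl0 : 0 < l) (hs0 : 0 < s) (hs110 : s ≤ 110*l)
    (hσhalf : 1/2 ≤ σ^2)
    (hc0 : 0 ≤ c) (hc1 : c ≤ 1) (hm0 : 0 ≤ m) (hm5 : m ≤ 5)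
    (hDv : Dv = s^2 + σ^2)
    (hq0 : 0 < q) (hq2 : q^2 = Dv)
    (hr0 : 0 < r) (hρ0 : 0 < ρ) (hρr : r ≤ 2*ρ)
    (hdAa0 : 0 ≤ dAa) (hdAa : dAa ≤ s*(c*r + m*ρ)/Dv)
    (ha00 : 0 < a0) (hA2 : a0*l ≤ A)
    (hKA : KA = 8000*ρ/a0) :
    l ^ (-(1:ℝ)/2) * (q⁻¹ * (Real.exp (-A) * dAa))
      ≤ KA * (l ^ (-(1:ℝ)/2) * Real.exp (-(a0/2*l))) := by
  have hDv0 : 0 < Dv := by nlinarith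
  have hqhalf : 1/2 ≤ q := by nlinarith
  have hq_inv : q⁻¹ ≤ 2 := by
    rw [show (2:ℝ) = ((1:ℝ)/2)⁻¹ by norm_num]
    exact inv_anti₀ (by norm_num) hqhalf
  have hnum : s*(c*r+m*ρ) ≤ 770*(l*ρ) := by
    have h1 : c*r+m*ρ ≤ 7*ρ := by
      nlinarith [mul_le_mul_of_nonneg_right hc1 hr0.le,
        mul_le_mul_of_nonneg_right hm5 hρ0.le]
    calc s*(c*r+m*ρ) ≤ (110*l)*(7*ρ) := by
          apply mul_le_mul hs110 h1
            (add_nonneg (mul_nonneg hc0 hr0.le) (mul_nonneg hm0 hρ0.le))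
            (by nlinarith)
      _ = 770*(l*ρ) := by ring
  have hfrac : s*(c*r+m*ρ)/Dv ≤ 1540*(l*ρ) := by
    rw [div_le_iff₀ hDv0]
    have h8 : (0:ℝ) ≤ l*ρ := by nlinarith
    nlinarith [hnum, mul_nonneg (show (0:ℝ) ≤ Dv - 1/2 by nlinarith [sq_nonneg s]) h8]
  have hE : Real.exp (-A) ≤ Real.exp (-(a0*l)) := Real.exp_le_exp.mpr (by linarith)
  have hkey : q⁻¹ * (Real.exp (-A) * dAa) ≤ Real.exp (-(a0*l)) * (3080*(l*ρ)) := by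
    have h2 : dAa ≤ 1540*(l*ρ) := le_trans hdAa hfrac
    have h3 : q⁻¹ * dAa ≤ 2*(1540*(l*ρ)) := by
      apply mul_le_mul hq_inv h2 hdAa0 (by norm_num)
    calc q⁻¹ * (Real.exp (-A) * dAa) = Real.exp (-A) * (q⁻¹ * dAa) := by ring
      _ ≤ Real.exp (-(a0*l)) * (2*(1540*(l*ρ))) :=
          mul_le_mul hE h3 (mul_nonneg (inv_nonneg.mpr hq0.le) hdAa0) (Real.exp_pos _).le
      _ = Real.exp (-(a0*l)) * (3080*(l*ρ)) := by ring
  have hrpw : 0 ≤ l ^ (-(1:ℝ)/2) := Real.rpow_nonneg hl0.le _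
  calc l ^ (-(1:ℝ)/2) * (q⁻¹ * (Real.exp (-A) * dAa))
      ≤ l ^ (-(1:ℝ)/2) * (Real.exp (-(a0*l)) * (3080*(l*ρ))) :=
        mul_le_mul_of_nonneg_left hkey hrpw
    _ = 3080*ρ*(l ^ (-(1:ℝ)/2) * (l * Real.exp (-(a0*l)))) := by ring
    _ ≤ 3080*ρ*(l ^ (-(1:ℝ)/2) * ((2/a0) * Real.exp (-(a0/2*l)))) := by
        apply mul_le_mul_of_nonneg_left _ (by nlinarith)
        exact mul_le_mul_of_nonneg_left (my_linear_exp ha00 hl0.le) hrpw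
    _ = (6160*ρ/a0) * (l ^ (-(1:ℝ)/2) * Real.exp (-(a0/2*l))) := by ring
    _ ≤ KA * (l ^ (-(1:ℝ)/2) * Real.exp (-(a0/2*l))) := by
        rw [hKA]
        apply mul_le_mul_of_nonneg_right _ (mul_nonneg hrpw (Real.exp_pos _).le)
        rw [div_le_div_iff₀ ha00 ha00]
        nlinarith

lemma my_caseB1_bound {l s σ c m Dv q r ρ a0 a1 aS A dAa KB1 : ℝ}
    (hl0 : 0 < l) (hs0 : 0 < s) (hs110 : s ≤ 110*l)
    (hσ0 : 0 < σ)
    (hc0 : 0 ≤ c) (hc1 : c ≤ 1) (hm0 : 0 ≤ m) (hmDv : m ≤ Dv)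
    (hDv0 : 0 < Dv)
    (hq0 : 0 < q) (hqσ : σ ≤ q)
    (hσDv : σ^2 ≤ Dv)
    (hr0 : 0 < r) (hρ0 : 0 < ρ)
    (hdAa0 : 0 ≤ dAa) (hdAa : dAa ≤ s*(c*r + m*ρ)/Dv)
    (ha00 : 0 < a0) (ha10 : 0 < a1) (haS : aS = a1 + a0)
    (hA : a1*l + a0*l ≤ A)
    (hKB1 : KB1 = 220*(r/σ^3 + ρ/σ)/aS) :
    l ^ (-(1:ℝ)/2) * (q⁻¹ * (Real.exp (-A) * dAa))
      ≤ KB1 * (l ^ (-(1:ℝ)/2) * Real.exp (-(aS/2*l))) := by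
  have haS0 : 0 < aS := by rw [haS]; linarith
  have hfsplit : q⁻¹*(s*(c*r+m*ρ)/Dv) = s*(c*r)/(q*Dv) + s*(m*ρ)/(q*Dv) := by
    field_simp
  have hx1 : s*(c*r)/(q*Dv) ≤ 110*l*(r/σ^3) := by
    rw [div_le_iff₀ (mul_pos hq0 hDv0)]
    have e : 110*l*(r/σ^3)*(q*Dv) = 110*l*r*(q*Dv)/σ^3 := by ring
    rw [e, le_div_iff₀ (by positivity)]
    have h1 : σ*σ^2 ≤ q*Dv := by
      apply mul_le_mul hqσ hσDv (sq_nonneg σ) hq0.le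
    have h2 : s*(c*r) ≤ 110*l*r := by
      nlinarith [mul_le_mul_of_nonneg_right hc1 hr0.le,
        mul_le_mul_of_nonneg_right hs110 (mul_nonneg hc0 hr0.le)]
    calc s*(c*r)*σ^3 = (s*(c*r))*(σ*σ^2) := by ring
      _ ≤ (110*l*r)*(q*Dv) := by
          apply mul_le_mul h2 h1 (by positivity)
          positivity
  have hx2 : s*(m*ρ)/(q*Dv) ≤ 110*l*(ρ/σ) := by
    rw [div_le_iff₀ (mul_pos hq0 hDv0)]
    have e : 110*l*(ρ/σ)*(q*Dv) = 110*l*ρ*(q*Dv)/σ := by ring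
    rw [e, le_div_iff₀ hσ0]
    have h1 : s*m ≤ (110*l)*Dv := by
      apply mul_le_mul hs110 hmDv hm0 (by linarith)
    calc s*(m*ρ)*σ = (s*m)*(ρ*σ) := by ring
      _ ≤ ((110*l)*Dv)*(ρ*σ) := by
          apply mul_le_mul_of_nonneg_right h1 (by positivity)
      _ ≤ 110*l*ρ*(q*Dv) := by
          have h13 := mul_le_mul_of_nonneg_left hqσ
            (show (0:ℝ) ≤ 110*l*ρ*Dv by positivity)
          nlinarith [h13]
  have h4 : q⁻¹*dAa ≤ 110*l*(r/σ^3 + ρ/σ) := by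
    calc q⁻¹*dAa ≤ q⁻¹*(s*(c*r+m*ρ)/Dv) := by
          apply mul_le_mul_of_nonneg_left hdAa (inv_nonneg.mpr hq0.le)
      _ = s*(c*r)/(q*Dv) + s*(m*ρ)/(q*Dv) := hfsplit
      _ ≤ 110*l*(r/σ^3) + 110*l*(ρ/σ) := add_le_add hx1 hx2
      _ = 110*l*(r/σ^3 + ρ/σ) := by ring
  have hE : Real.exp (-A) ≤ Real.exp (-(aS*l)) := by
    apply Real.exp_le_exp.mpr
    rw [haS]; nlinarith
  have hrpw : 0 ≤ l ^ (-(1:ℝ)/2) := Real.rpow_nonneg hl0.le _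
  have hpos : (0:ℝ) ≤ r/σ^3 + ρ/σ := by positivity
  calc l ^ (-(1:ℝ)/2) * (q⁻¹ * (Real.exp (-A) * dAa))
      ≤ l ^ (-(1:ℝ)/2) * (Real.exp (-(aS*l)) * (110*l*(r/σ^3 + ρ/σ))) := by
        apply mul_le_mul_of_nonneg_left _ hrpw
        calc q⁻¹ * (Real.exp (-A) * dAa) = Real.exp (-A) * (q⁻¹*dAa) := by ring
          _ ≤ Real.exp (-(aS*l)) * (110*l*(r/σ^3 + ρ/σ)) := by
              apply mul_le_mul hE h4 (mul_nonneg (inv_nonneg.mpr hq0.le) hdAa0)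
                (Real.exp_pos _).le
    _ = 110*(r/σ^3 + ρ/σ)*(l ^ (-(1:ℝ)/2) * (l * Real.exp (-(aS*l)))) := by ring
    _ ≤ 110*(r/σ^3 + ρ/σ)*(l ^ (-(1:ℝ)/2) * ((2/aS) * Real.exp (-(aS/2*l)))) := by
        apply mul_le_mul_of_nonneg_left _ (by positivity)
        exact mul_le_mul_of_nonneg_left (my_linear_exp haS0 hl0.le) hrpw
    _ = KB1 * (l ^ (-(1:ℝ)/2) * Real.exp (-(aS/2*l))) := by
        rw [hKB1]; ring

lemma my_caseB2_bound {l s σ c m Dv q r ρ r2 a0 b1 bp W V Kb A dAa : ℝ}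
    (hl0 : 0 < l) (hs2l : 2*l ≤ s) (hs0 : 0 < s)
    (hc0 : 0 ≤ c) (hc1 : c ≤ 1) (hm0 : 0 ≤ m) (hmDv : m ≤ Dv)
    (hDv : Dv = s^2 + σ^2) (hDv0 : 0 < Dv)
    (hq0 : 0 < q) (hqs : s ≤ q)
    (hr0 : 0 < r) (hρ0 : 0 < ρ) (hrr : r^2 = r2) (hr20 : 0 < r2)
    (hdAa0 : 0 ≤ dAa) (hdAa : dAa ≤ s*(c*r + m*ρ)/Dv)
    (ha00 : 0 < a0) (hb10 : 0 < b1) (hbp0 : 0 < bp)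
    (hb1 : b1 = r2/1024) (hbp : bp = r2/2048)
    (hW : W = Real.sqrt (a0*b1)) (hV : V = Real.sqrt W) (hW0 : 0 < W) (hV0 : 0 < V)
    (hKb : Kb = ρ/(W*V))
    (hA : b1*l⁻¹ + a0*l ≤ A) :
    l ^ (-(1:ℝ)/2) * (q⁻¹ * (Real.exp (-A) * dAa))
      ≤ 12*((l⁻¹)^2*Real.exp (-(bp*l⁻¹))) + Kb*(l ^ (-(1:ℝ)/2)) := by
  have hlinv : 0 < l⁻¹ := inv_pos.mpr hl0
  have hfsplit : q⁻¹*(s*(c*r+m*ρ)/Dv) = s*(c*r)/(q*Dv) + s*(m*ρ)/(q*Dv) := by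
    field_simp
  have hx1 : s*(c*r)/(q*Dv) ≤ r/(4*l^2) := by
    rw [div_le_div_iff₀ (mul_pos hq0 hDv0) (by positivity)]
    have h1 : s^2 ≤ Dv := by rw [hDv]; nlinarith [sq_nonneg σ]
    have h2 : s*s^2 ≤ q*Dv := by
      apply mul_le_mul hqs h1 (sq_nonneg s) hq0.le
    have h3 : 4*l^2 ≤ s^2 := by nlinarith
    have h5 : s*(c*r) ≤ s*r := by
      nlinarith [mul_le_mul_of_nonneg_right hc1 hr0.le]
    calc s*(c*r)*(4*l^2) ≤ s*r*(4*l^2) := by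
          apply mul_le_mul_of_nonneg_right h5 (by positivity)
      _ ≤ s*r*s^2 := by
          apply mul_le_mul_of_nonneg_left h3 (by positivity)
      _ = r*(s*s^2) := by ring
      _ ≤ r*(q*Dv) := by
          apply mul_le_mul_of_nonneg_left h2 hr0.le
  have hx2 : s*(m*ρ)/(q*Dv) ≤ ρ := by
    rw [div_le_iff₀ (mul_pos hq0 hDv0)]
    have h1 : s*m ≤ q*Dv := by
      apply mul_le_mul hqs hmDv hm0 hq0.le
    calc s*(m*ρ) = (s*m)*ρ := by ring
      _ ≤ (q*Dv)*ρ := mul_le_mul_of_nonneg_right h1 hρ0.le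
      _ = ρ*(q*Dv) := by ring
  have h4 : q⁻¹*dAa ≤ r/(4*l^2) + ρ := by
    calc q⁻¹*dAa ≤ q⁻¹*(s*(c*r+m*ρ)/Dv) := by
          apply mul_le_mul_of_nonneg_left hdAa (inv_nonneg.mpr hq0.le)
      _ = s*(c*r)/(q*Dv) + s*(m*ρ)/(q*Dv) := hfsplit
      _ ≤ r/(4*l^2) + ρ := add_le_add hx1 hx2
  have hrpw : 0 ≤ l ^ (-(1:ℝ)/2) := Real.rpow_nonneg hl0.le _
  have hEpos := (Real.exp_pos (-A)).le
  have hdecomp : l ^ (-(1:ℝ)/2) * (q⁻¹ * (Real.exp (-A) * dAa))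
      ≤ l ^ (-(1:ℝ)/2) * (Real.exp (-A) * (r/(4*l^2)))
        + l ^ (-(1:ℝ)/2) * (Real.exp (-A) * ρ) := by
    have h5 : q⁻¹ * (Real.exp (-A) * dAa) ≤ Real.exp (-A) * (r/(4*l^2))
        + Real.exp (-A) * ρ := by
      calc q⁻¹ * (Real.exp (-A) * dAa) = Real.exp (-A) * (q⁻¹*dAa) := by ring
        _ ≤ Real.exp (-A) * (r/(4*l^2) + ρ) :=
            mul_le_mul_of_nonneg_left h4 hEpos
        _ = Real.exp (-A) * (r/(4*l^2)) + Real.exp (-A) * ρ := by ring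
    calc l ^ (-(1:ℝ)/2) * (q⁻¹ * (Real.exp (-A) * dAa))
        ≤ l ^ (-(1:ℝ)/2) * (Real.exp (-A) * (r/(4*l^2)) + Real.exp (-A) * ρ) :=
          mul_le_mul_of_nonneg_left h5 hrpw
      _ = _ := by ring
  have hpiece1 : l ^ (-(1:ℝ)/2) * (Real.exp (-A) * (r/(4*l^2)))
      ≤ 12*((l⁻¹)^2*Real.exp (-(bp*l⁻¹))) := by
    have hb2bp : b1 = 2*bp := by rw [hb1, hbp]; ring
    have hEb : Real.exp (-A) ≤ Real.exp (-(bp*l⁻¹)) * Real.exp (-(bp*l⁻¹)) := by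
      rw [← Real.exp_add]
      apply Real.exp_le_exp.mpr
      have h6 : 0 < a0*l := mul_pos ha00 hl0
      have h7 : b1*l⁻¹ = bp*l⁻¹ + bp*l⁻¹ := by rw [hb2bp]; ring
      linarith only [hA, h6, h7.ge, h7.le]
    have hsqbp : r/46 ≤ Real.sqrt bp := by
      have h8 : (r/46)^2 ≤ bp := by
        rw [hbp, ← hrr]
        linarith only [sq_nonneg r]
      calc r/46 = Real.sqrt ((r/46)^2) := (Real.sqrt_sq (by positivity)).symm
        _ ≤ Real.sqrt bp := Real.sqrt_le_sqrt h8
    have hsqbp0 : 0 < Real.sqrt bp := Real.sqrt_pos.mpr hbp0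
    have hsl : Real.exp (-(bp*l⁻¹)) ≤ Real.sqrt l * (Real.sqrt bp)⁻¹ := by
      have h9 := my_exp_neg_le_inv_sqrt (mul_pos hbp0 hlinv)
      rw [Real.sqrt_mul hbp0.le, Real.sqrt_inv, mul_inv, inv_inv] at h9
      calc Real.exp (-(bp*l⁻¹)) ≤ (Real.sqrt bp)⁻¹ * Real.sqrt l := h9
        _ = Real.sqrt l * (Real.sqrt bp)⁻¹ := by ring
    have hsqrtl0 : 0 < Real.sqrt l := Real.sqrt_pos.mpr hl0
    have hrw := my_rpow_half hl0
    calc l ^ (-(1:ℝ)/2) * (Real.exp (-A) * (r/(4*l^2)))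
        ≤ l ^ (-(1:ℝ)/2) * ((Real.exp (-(bp*l⁻¹)) * Real.exp (-(bp*l⁻¹))) * (r/(4*l^2))) := by
          apply mul_le_mul_of_nonneg_left _ hrpw
          apply mul_le_mul_of_nonneg_right hEb (by positivity)
      _ ≤ l ^ (-(1:ℝ)/2) * (((Real.sqrt l * (Real.sqrt bp)⁻¹) * Real.exp (-(bp*l⁻¹))) * (r/(4*l^2))) := by
          apply mul_le_mul_of_nonneg_left _ hrpw
          apply mul_le_mul_of_nonneg_right _ (by positivity)
          apply mul_le_mul_of_nonneg_right hsl (Real.exp_pos _).le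
      _ = ((Real.sqrt l)⁻¹ * Real.sqrt l) * ((Real.sqrt bp)⁻¹ * (r/4)) *
            ((l⁻¹)^2 * Real.exp (-(bp*l⁻¹))) := by
          rw [hrw]
          field_simp
      _ = ((Real.sqrt bp)⁻¹ * (r/4)) * ((l⁻¹)^2 * Real.exp (-(bp*l⁻¹))) := by
          rw [inv_mul_cancel₀ hsqrtl0.ne']
          ring
      _ ≤ 12 * ((l⁻¹)^2 * Real.exp (-(bp*l⁻¹))) := by
          apply mul_le_mul_of_nonneg_right _ (by positivity)
          have h10 : (Real.sqrt bp)⁻¹ ≤ (r/46)⁻¹ := inv_anti₀ (by positivity) hsqbp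
          calc (Real.sqrt bp)⁻¹ * (r/4) ≤ (r/46)⁻¹ * (r/4) :=
                mul_le_mul_of_nonneg_right h10 (by positivity)
            _ = 46/4 := by field_simp
            _ ≤ 12 := by norm_num
  have hpiece2 : l ^ (-(1:ℝ)/2) * (Real.exp (-A) * ρ) ≤ Kb*(l ^ (-(1:ℝ)/2)) := by
    have hAM : 2*W ≤ b1*l⁻¹ + a0*l := by
      have h6 := sq_nonneg (Real.sqrt (b1*l⁻¹) - Real.sqrt (a0*l))
      have e1 : Real.sqrt (b1*l⁻¹)^2 = b1*l⁻¹ := Real.sq_sqrt (mul_pos hb10 hlinv).le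
      have e2 : Real.sqrt (a0*l)^2 = a0*l := Real.sq_sqrt (mul_pos ha00 hl0).le
      have e3 : Real.sqrt (b1*l⁻¹) * Real.sqrt (a0*l) = W := by
        rw [← Real.sqrt_mul (mul_pos hb10 hlinv).le, hW]
        congr 1
        field_simp
      rw [sub_sq] at h6
      linarith only [h6, e1, e2, e3]
    have hEW : Real.exp (-A) ≤ 1/(W*V) := by
      have h7 : Real.exp (-A) ≤ Real.exp (-(2*W)) :=
        Real.exp_le_exp.mpr (by linarith)
      have h8 := my_exp_neg_le_two_div (show 0 < 2*W by linarith)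
      have h9 : 2/((2*W)*Real.sqrt (2*W)) ≤ 1/(W*V) := by
        have h11 : V ≤ Real.sqrt (2*W) := by
          rw [hV]; exact Real.sqrt_le_sqrt (by linarith)
        have h12 : 0 < Real.sqrt (2*W) := Real.sqrt_pos.mpr (by linarith)
        rw [div_le_div_iff₀ (by positivity) (mul_pos hW0 hV0)]
        nlinarith [mul_le_mul_of_nonneg_left h11 (show (0:ℝ) ≤ 2*W by linarith)]
      linarith
    calc l ^ (-(1:ℝ)/2) * (Real.exp (-A) * ρ)
        ≤ l ^ (-(1:ℝ)/2) * ((1/(W*V)) * ρ) := by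
          apply mul_le_mul_of_nonneg_left _ hrpw
          exact mul_le_mul_of_nonneg_right hEW hρ0.le
      _ = Kb*(l ^ (-(1:ℝ)/2)) := by rw [hKb]; ring
  calc l ^ (-(1:ℝ)/2) * (q⁻¹ * (Real.exp (-A) * dAa))
      ≤ l ^ (-(1:ℝ)/2) * (Real.exp (-A) * (r/(4*l^2)))
        + l ^ (-(1:ℝ)/2) * (Real.exp (-A) * ρ) := hdecomp
    _ ≤ 12*((l⁻¹)^2*Real.exp (-(bp*l⁻¹))) + Kb*(l ^ (-(1:ℝ)/2)) :=
        add_le_add hpiece1 hpiece2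

theorem oscillating_kernel_estimate_two :
    ∃ C > 0, ∀ t : ℝ, 0 < t → t ≤ Real.pi/4 → ∀ x y : ℝ, x ≠ y →
      ‖∫ l in (0:ℝ)..1, ((l ^ (-(1:ℝ)/2) : ℝ) : ℂ) * deriv (fun v => Kfun t x v l) y *
          Complex.exp (Complex.I * (Bfun t x y l : ℂ))‖ ≤ C / |x - y| ^ 2 := by
  refine ⟨2000000, by norm_num, ?_⟩
  intro t ht ht4 x y hxy
  have hπ := Real.pi_pos
  have h2t0 : 0 < 2*t := by linarith
  have h2tpi : 2*t ≤ Real.pi/2 := by linarith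
  have hσ0 : 0 < Real.sin (2*t) :=
    Real.sin_pos_of_pos_of_lt_pi h2t0 (by linarith)
  have hσ1 : Real.sin (2*t) ≤ 1 := Real.sin_le_one _
  have hc0 : 0 ≤ Real.cos (2*t) := Real.cos_nonneg_of_mem_Icc ⟨by linarith, h2tpi⟩
  have hc1 : Real.cos (2*t) ≤ 1 := Real.cos_le_one _
  have hsc : Real.sin (2*t)^2 + Real.cos (2*t)^2 = 1 := Real.sin_sq_add_cos_sq (2*t)
  obtain ⟨σ, hσdef⟩ : ∃ σ, σ = Real.sin (2*t) := ⟨_, rfl⟩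
  obtain ⟨c, hcdef⟩ : ∃ c, c = Real.cos (2*t) := ⟨_, rfl⟩
  rw [← hσdef] at hσ0 hσ1 hsc
  rw [← hcdef] at hc0 hc1 hsc
  -- geometry
  obtain ⟨r2, hr2def⟩ : ∃ u, u = (x-y)^2 := ⟨_, rfl⟩
  obtain ⟨ρ2, hρ2def⟩ : ∃ u, u = x^2+y^2 := ⟨_, rfl⟩
  have hxy0 : x - y ≠ 0 := sub_ne_zero.mpr hxy
  have hr20 : 0 < r2 := by rw [hr2def]; positivity
  have hρ20 : 0 < ρ2 := by
    rw [hρ2def]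
    rcases (show x ≠ 0 ∨ y ≠ 0 by
      by_contra h; push_neg at h; exact hxy (h.1.trans h.2.symm)) with h | h
    · positivity
    · positivity
  have hr2ρ2 : r2 ≤ 2*ρ2 := by rw [hr2def, hρ2def]; nlinarith [sq_nonneg (x+y)]
  obtain ⟨r, hrdef⟩ : ∃ u, u = Real.sqrt r2 := ⟨_, rfl⟩
  obtain ⟨ρ, hρdef⟩ : ∃ u, u = Real.sqrt ρ2 := ⟨_, rfl⟩
  have hr0 : 0 < r := by rw [hrdef]; exact Real.sqrt_pos.mpr hr20
  have hρ0 : 0 < ρ := by rw [hρdef]; exact Real.sqrt_pos.mpr hρ20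
  have hrr : r^2 = r2 := by rw [hrdef]; exact Real.sq_sqrt hr20.le
  have hρρ : ρ^2 = ρ2 := by rw [hρdef]; exact Real.sq_sqrt hρ20.le
  have hrabs : r = |x - y| := by rw [hrdef, hr2def, Real.sqrt_sq_eq_abs]
  have hρr : r ≤ 2*ρ := by nlinarith
  have hyρ : |y| ≤ ρ := by
    have h1 : Real.sqrt (y^2) ≤ Real.sqrt ρ2 := Real.sqrt_le_sqrt (by rw [hρ2def]; nlinarith [sq_nonneg x])
    rwa [Real.sqrt_sq_eq_abs, ← hρdef] at h1
  -- constants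
  obtain ⟨a0, ha0def⟩ : ∃ u, u = ρ2/8 := ⟨_, rfl⟩
  obtain ⟨a1, ha1def⟩ : ∃ u, u = r2/(4*σ^2) := ⟨_, rfl⟩
  obtain ⟨aS, haSdef⟩ : ∃ u, u = a1 + a0 := ⟨_, rfl⟩
  obtain ⟨b1, hb1def⟩ : ∃ u, u = r2/1024 := ⟨_, rfl⟩
  obtain ⟨bp, hbpdef⟩ : ∃ u, u = r2/2048 := ⟨_, rfl⟩
  have ha00 : 0 < a0 := by rw [ha0def]; positivity
  have ha10 : 0 < a1 := by rw [ha1def]; positivity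
  have haS0 : 0 < aS := by rw [haSdef]; linarith
  have hb10 : 0 < b1 := by rw [hb1def]; positivity
  have hbp0 : 0 < bp := by rw [hbpdef]; positivity
  obtain ⟨W, hWdef⟩ : ∃ u, u = Real.sqrt (a0*b1) := ⟨_, rfl⟩
  obtain ⟨V, hVdef⟩ : ∃ u, u = Real.sqrt W := ⟨_, rfl⟩
  have hW0 : 0 < W := by rw [hWdef]; exact Real.sqrt_pos.mpr (by positivity)
  have hV0 : 0 < V := by rw [hVdef]; exact Real.sqrt_pos.mpr hW0
  obtain ⟨KA, hKAdef⟩ : ∃ u, u = 8000*ρ/a0 := ⟨_, rfl⟩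
  obtain ⟨KB1, hKB1def⟩ : ∃ u, u = 220*(r/σ^3 + ρ/σ)/aS := ⟨_, rfl⟩
  obtain ⟨Kb, hKbdef⟩ : ∃ u, u = ρ/(W*V) := ⟨_, rfl⟩
  have hKA0 : 0 ≤ KA := by rw [hKAdef]; positivity
  have hKB10 : 0 ≤ KB1 := by rw [hKB1def]; positivity
  have hKb0 : 0 ≤ Kb := by rw [hKbdef]; positivity
  -- majorant
  set g : ℝ → ℝ := fun l => KA * (l ^ (-(1:ℝ)/2) * Real.exp (-(a0/2*l)))
    + KB1 * (l ^ (-(1:ℝ)/2) * Real.exp (-(aS/2*l)))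
    + 12 * ((l⁻¹)^2 * Real.exp (-(bp*l⁻¹)))
    + Kb * (l ^ (-(1:ℝ)/2)) with hgdef
  have hi1 : IntervalIntegrable (fun l : ℝ => KA * (l ^ (-(1:ℝ)/2) * Real.exp (-(a0/2*l)))) volume 0 1 :=
    my_intable_rpow_exp.const_mul KA
  have hi2 : IntervalIntegrable (fun l : ℝ => KB1 * (l ^ (-(1:ℝ)/2) * Real.exp (-(aS/2*l)))) volume 0 1 :=
    my_intable_rpow_exp.const_mul KB1
  have hi3 : IntervalIntegrable (fun l : ℝ => 12 * ((l⁻¹)^2 * Real.exp (-(bp*l⁻¹)))) volume 0 1 :=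
    (my_intable_G hbp0).const_mul 12
  have hi4 : IntervalIntegrable (fun l : ℝ => Kb * (l ^ (-(1:ℝ)/2))) volume 0 1 :=
    my_intable_rpow.const_mul Kb
  have hgint : IntervalIntegrable g volume 0 1 := ((hi1.add hi2).add hi3).add hi4
  -- pointwise bound
  have hptw : ∀ l ∈ Set.Ioc (0:ℝ) 1,
      ‖((l ^ (-(1:ℝ)/2) : ℝ) : ℂ) * deriv (fun v => Kfun t x v l) y *
        Complex.exp (Complex.I * (Bfun t x y l : ℂ))‖ ≤ g l := by
    intro l hl
    obtain ⟨hl0, hl1⟩ := hl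
    obtain ⟨s, hsdef⟩ : ∃ u, u = Real.sinh (2*l) := ⟨_, rfl⟩
    obtain ⟨ch, hchdef⟩ : ∃ u, u = Real.cosh (2*l) := ⟨_, rfl⟩
    obtain ⟨m, hmdef⟩ : ∃ u, u = ch - c := ⟨_, rfl⟩
    obtain ⟨Dv, hDvdef⟩ : ∃ u, u = s^2 + σ^2 := ⟨_, rfl⟩
    have hs2l : 2*l ≤ s := by
      rw [hsdef]; exact Real.self_le_sinh_iff.mpr (by linarith only [hl0])
    have hs0 : 0 < s := by linarith only [hs2l, hl0]
    have hs110 : s ≤ 110*l := by rw [hsdef]; exact my_sinh_upper hl0 hl1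
    have hch1 : 1 ≤ ch := by rw [hchdef]; exact Real.one_le_cosh _
    have hch5 : ch ≤ 5 := by rw [hchdef]; exact my_cosh_upper hl0 hl1
    have hch2 : ch^2 = s^2 + 1 := by rw [hchdef, hsdef]; exact Real.cosh_sq _
    obtain ⟨hm0, hm5, hmDv, hDv8⟩ := my_m_facts hch2 hch1 hch5 hc0 hc1 hsc hmdef hDvdef
    have hDv0 : 0 < Dv := by
      rw [hDvdef]; linarith only [pow_pos hσ0 2, sq_nonneg s]
    have hDfun : Dfun t l = Dv := by
      rw [hDvdef, hsdef, hσdef]; simp only [Dfun]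
    obtain ⟨q, hqdef⟩ : ∃ u, u = Real.sqrt Dv := ⟨_, rfl⟩
    have hq0 : 0 < q := by rw [hqdef]; exact Real.sqrt_pos.mpr hDv0
    have hq2 : q^2 = Dv := by rw [hqdef]; exact Real.sq_sqrt hDv0.le
    have hqs : s ≤ q := by
      rw [hqdef]
      calc s = Real.sqrt (s^2) := (Real.sqrt_sq hs0.le).symm
        _ ≤ Real.sqrt Dv := Real.sqrt_le_sqrt (by rw [hDvdef]; linarith only [sq_nonneg σ])
    have hqσ : σ ≤ q := by
      rw [hqdef]
      calc σ = Real.sqrt (σ^2) := (Real.sqrt_sq hσ0.le).symm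
        _ ≤ Real.sqrt Dv := Real.sqrt_le_sqrt (by rw [hDvdef]; linarith only [sq_nonneg s])
    have hAeq : Afun t x y l = (s*c*r2 + s*m*ρ2)/(2*Dv) := by
      simp only [Afun]
      rw [hDfun, ← hsdef, ← hcdef, ← hchdef, ← hr2def, ← hρ2def, ← hmdef]
      congr 1
      ring
    have hdAeq : dAfun t x y l = s*(c*(y-x) + m*y)/Dv := by
      simp only [dAfun]
      rw [hDfun, ← hsdef, ← hcdef, ← hchdef, ← hmdef]
    have hAbs : |dAfun t x y l| ≤ s*(c*r + m*ρ)/Dv := by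
      rw [hdAeq]; exact my_dA_abs hs0 hDv0 hc0 hm0 hrabs hyρ
    have hA2' : a0*l ≤ s*m*ρ2/(2*Dv) := my_A2_lb hDv0 hs2l hDv8 hl0 hρ20 ha0def
    have hsum_div : s*c*r2/(2*Dv) + s*m*ρ2/(2*Dv) = (s*c*r2 + s*m*ρ2)/(2*Dv) := by
      rw [← add_div]
    have hpos1 : 0 ≤ s*c*r2/(2*Dv) :=
      div_nonneg (mul_nonneg (mul_nonneg hs0.le hc0) hr20.le) (by linarith only [hDv0])
    have hA2 : a0*l ≤ Afun t x y l := by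
      rw [hAeq, ← hsum_div]
      linarith only [hA2', hpos1]
    have hrpw : 0 ≤ l ^ (-(1:ℝ)/2) := Real.rpow_nonneg hl0.le _
    have hT1 : 0 ≤ KA * (l ^ (-(1:ℝ)/2) * Real.exp (-(a0/2*l))) :=
      mul_nonneg hKA0 (mul_nonneg hrpw (Real.exp_pos _).le)
    have hT2 : 0 ≤ KB1 * (l ^ (-(1:ℝ)/2) * Real.exp (-(aS/2*l))) :=
      mul_nonneg hKB10 (mul_nonneg hrpw (Real.exp_pos _).le)
    have hT3 : 0 ≤ 12 * ((l⁻¹)^2 * Real.exp (-(bp*l⁻¹))) := by positivity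
    have hT4 : 0 ≤ Kb * (l ^ (-(1:ℝ)/2)) := mul_nonneg hKb0 hrpw
    rw [my_norm_integrand t x y l (by rw [hDfun]; exact hDv0.ne') hl0, hDfun, ← hqdef]
    rcases le_or_gt (1/2:ℝ) (σ^2) with hσcase | hσcase
    · have hb := my_caseA_bound hl0 hs0 hs110 hσcase hc0 hc1 hm0 hm5 hDvdef hq0 hq2
        hr0 hρ0 hρr (abs_nonneg _) hAbs ha00 hA2 hKAdef
      refine le_trans hb ?_
      rw [hgdef]
      simp only
      linarith only [hT2, hT3, hT4]
    · have hchalf := my_c_half hsc hσcase hc0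
      rcases le_or_gt s σ with hss | hss
      · have hDv2σ : Dv ≤ 2*σ^2 := by
          rw [hDvdef]
          linarith only [mul_le_mul hss hss hs0.le (le_trans hs0.le hss)]
        have hA1' : a1*l ≤ s*c*r2/(2*Dv) :=
          my_A1_lb_B1 hl0 hs2l hchalf hDv0 hDv2σ hσ0 hr20 ha1def
        have hAlb : a1*l + a0*l ≤ Afun t x y l := by
          rw [hAeq, ← hsum_div]
          linarith only [hA1', hA2']
        have hσ2Dv : σ^2 ≤ Dv := by rw [hDvdef]; linarith only [sq_nonneg s]
        have hb := my_caseB1_bound hl0 hs0 hs110 hσ0 hc0 hc1 hm0 hmDv hDv0 hq0 hqσ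
          hσ2Dv hr0 hρ0 (abs_nonneg _) hAbs ha00 ha10 haSdef hAlb hKB1def
        refine le_trans hb ?_
        rw [hgdef]
        simp only
        linarith only [hT1, hT3, hT4]
      · have hDv2s : Dv ≤ 2*s^2 := by
          rw [hDvdef]
          linarith only [mul_le_mul hss.le hss.le hσ0.le (le_trans hσ0.le hss.le)]
        have hA1' : b1*l⁻¹ ≤ s*c*r2/(2*Dv) :=
          my_A1_lb_B2 hl0 hs2l hs110 hchalf hDv0 hDv2s hr20 hb1def
        have hAlb : b1*l⁻¹ + a0*l ≤ Afun t x y l := by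
          rw [hAeq, ← hsum_div]
          linarith only [hA1', hA2']
        have hb := my_caseB2_bound hl0 hs2l hs0 hc0 hc1 hm0 hmDv hDvdef hDv0 hq0 hqs
          hr0 hρ0 hrr hr20 (abs_nonneg _) hAbs ha00 hb10 hbp0 hb1def hbpdef
          hWdef hVdef hW0 hV0 hKbdef hAlb
        refine le_trans hb ?_
        rw [hgdef]
        simp only
        linarith only [hT1, hT2]
  -- conclude
  have hmain : ‖∫ l in (0:ℝ)..1, ((l ^ (-(1:ℝ)/2) : ℝ) : ℂ) * deriv (fun v => Kfun t x v l) y *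
      Complex.exp (Complex.I * (Bfun t x y l : ℂ))‖ ≤ |∫ l in (0:ℝ)..1, g l| := by
    refine le_trans (intervalIntegral.norm_integral_le_of_norm_le (by norm_num) ?_ hgint) (le_abs_self _)
    exact ae_of_all _ hptw
  have hsplit : (∫ l in (0:ℝ)..1, g l)
      = (∫ l in (0:ℝ)..1, KA * (l ^ (-(1:ℝ)/2) * Real.exp (-(a0/2*l))))
      + (∫ l in (0:ℝ)..1, KB1 * (l ^ (-(1:ℝ)/2) * Real.exp (-(aS/2*l))))
      + (∫ l in (0:ℝ)..1, 12 * ((l⁻¹)^2 * Real.exp (-(bp*l⁻¹))))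
      + (∫ l in (0:ℝ)..1, Kb * (l ^ (-(1:ℝ)/2))) := by
    rw [hgdef, ← integral_add hi1 hi2, ← integral_add (hi1.add hi2) hi3,
      ← integral_add ((hi1.add hi2).add hi3) hi4]
  -- bound the four integrals
  have hIA : (∫ l in (0:ℝ)..1, KA * (l ^ (-(1:ℝ)/2) * Real.exp (-(a0/2*l)))) ≤ 1536000/r2 := by
    rw [intervalIntegral.integral_const_mul]
    have hsqrt : Real.sqrt (a0/2) = ρ/4 := by
      rw [ha0def, show ρ2/8/2 = (ρ/4)^2 by rw [← hρρ]; ring]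
      exact Real.sqrt_sq (by positivity)
    have h2 := my_L2 (show 0 < a0/2 by linarith)
    calc KA * ∫ l in (0:ℝ)..1, l ^ (-(1:ℝ)/2) * Real.exp (-(a0/2*l))
        ≤ KA * (3/Real.sqrt (a0/2)) := mul_le_mul_of_nonneg_left h2 hKA0
      _ = KA * (12/ρ) := by rw [hsqrt, div_div_eq_mul_div]; norm_num
      _ = 768000/ρ2 := by
          rw [hKAdef, ha0def, ← hρρ]
          field_simp
          ring
      _ ≤ 1536000/r2 := by
          rw [div_le_div_iff₀ hρ20 hr20]
          linarith only [mul_le_mul_of_nonneg_left hr2ρ2 (show (0:ℝ) ≤ 768000 by norm_num)]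
  have hIB : (∫ l in (0:ℝ)..1, KB1 * (l ^ (-(1:ℝ)/2) * Real.exp (-(aS/2*l)))) ≤ 40000/r2 := by
    rw [intervalIntegral.integral_const_mul]
    have h2 := my_L2 (show 0 < aS/2 by linarith)
    have hsqlb : r/(3*σ) ≤ Real.sqrt (aS/2) := by
      have e1 : (r/(3*σ))^2 = r2/(9*σ^2) := by rw [← hrr]; field_simp; ring
      have e2 : (r/(3*σ))^2 ≤ aS/2 := by
        rw [e1, haSdef, ha1def]
        have h3 : r2/(9*σ^2) ≤ r2/(8*σ^2) := by
          apply div_le_div_of_nonneg_left hr20.le (by positivity)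
          linarith only [sq_nonneg σ]
        have h4 : r2/(4*σ^2)/2 = r2/(8*σ^2) := by ring
        linarith
      calc r/(3*σ) = Real.sqrt ((r/(3*σ))^2) := (Real.sqrt_sq (by positivity)).symm
        _ ≤ Real.sqrt (aS/2) := Real.sqrt_le_sqrt e2
    have h5 : 3/Real.sqrt (aS/2) ≤ 9*σ/r := by
      calc 3/Real.sqrt (aS/2) ≤ 3/(r/(3*σ)) :=
            div_le_div_of_nonneg_left (by norm_num) (by positivity) hsqlb
        _ = 9*σ/r := by field_simp; ring
    have hb1' : 1980/(σ^2*aS) ≤ 7920/r2 := by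
      rw [div_le_div_iff₀ (by positivity) hr20]
      have e : σ^2*a1 = r2/4 := by rw [ha1def]; field_simp
      have e2 : σ^2*aS = r2/4 + σ^2*a0 := by rw [haSdef, mul_add, e]
      have h8 : (0:ℝ) ≤ σ^2*a0 := by positivity
      linarith only [e2, h8]
    have hb2' : 1980*ρ/(aS*r) ≤ 31680/r2 := by
      rw [div_le_div_iff₀ (by positivity) hr20]
      have e : a0 = ρ^2/8 := by rw [ha0def, ← hρρ]
      have h6 : ρ^2/8 ≤ aS := by rw [haSdef, ← e]; linarith
      have h7 : r2 ≤ 2*ρ*r := by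
        calc r2 = r*r := by rw [← hrr]; ring
          _ ≤ (2*ρ)*r := mul_le_mul_of_nonneg_right hρr hr0.le
          _ = 2*ρ*r := by ring
      linarith only [mul_le_mul_of_nonneg_right h6 hr0.le,
        mul_le_mul_of_nonneg_left h7 (show (0:ℝ) ≤ 1980*ρ by positivity)]
    have hsum : KB1*(9*σ/r) = 1980/(σ^2*aS) + 1980*ρ/(aS*r) := by
      rw [hKB1def]; field_simp; ring
    calc KB1 * ∫ l in (0:ℝ)..1, l ^ (-(1:ℝ)/2) * Real.exp (-(aS/2*l))
        ≤ KB1 * (3/Real.sqrt (aS/2)) := mul_le_mul_of_nonneg_left h2 hKB10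
      _ ≤ KB1 * (9*σ/r) := mul_le_mul_of_nonneg_left h5 hKB10
      _ = 1980/(σ^2*aS) + 1980*ρ/(aS*r) := hsum
      _ ≤ 7920/r2 + 31680/r2 := by linarith
      _ ≤ 40000/r2 := by
          rw [← add_div, div_le_div_iff_of_pos_right hr20]; norm_num
  have hIC : (∫ l in (0:ℝ)..1, 12 * ((l⁻¹)^2 * Real.exp (-(bp*l⁻¹)))) ≤ 25000/r2 := by
    rw [intervalIntegral.integral_const_mul]
    have h := my_L3 hbp0
    calc (12:ℝ) * ∫ l in (0:ℝ)..1, (l⁻¹)^2 * Real.exp (-(bp*l⁻¹))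
        ≤ 12 * (1/bp) := by
          apply mul_le_mul_of_nonneg_left h (by norm_num)
      _ ≤ 25000/r2 := by
          rw [hbpdef, one_div_div, mul_div_assoc', div_le_div_iff_of_pos_right hr20]
          norm_num
  have hID : (∫ l in (0:ℝ)..1, Kb * (l ^ (-(1:ℝ)/2))) ≤ 2200/r2 := by
    rw [intervalIntegral.integral_const_mul, my_int_rpow]
    have eab : a0*b1 = ρ2*r2/8192 := by rw [ha0def, hb1def]; ring
    have hWlb : ρ*r/91 ≤ W := by
      have h1 : (ρ*r/91)^2 ≤ a0*b1 := by
        rw [eab, ← hρρ, ← hrr]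
        linarith only [sq_nonneg (ρ*r)]
      calc ρ*r/91 = Real.sqrt ((ρ*r/91)^2) := (Real.sqrt_sq (by positivity)).symm
        _ ≤ Real.sqrt (a0*b1) := Real.sqrt_le_sqrt h1
        _ = W := hWdef.symm
    have hVlb : r/12 ≤ V := by
      have h1 : (r2/128)^2 ≤ a0*b1 := by
        rw [eab]
        linarith only [mul_le_mul_of_nonneg_right hr2ρ2 hr20.le]
      have h2 : r2/128 ≤ W := by
        calc r2/128 = Real.sqrt ((r2/128)^2) := (Real.sqrt_sq (by positivity)).symm
          _ ≤ Real.sqrt (a0*b1) := Real.sqrt_le_sqrt h1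
          _ = W := hWdef.symm
      have h3 : (r/12)^2 ≤ W := by
        rw [← hrr] at h2
        linarith only [h2, sq_nonneg r]
      calc r/12 = Real.sqrt ((r/12)^2) := (Real.sqrt_sq (by positivity)).symm
        _ ≤ Real.sqrt W := Real.sqrt_le_sqrt h3
        _ = V := hVdef.symm
    have hprod : (ρ*r/91)*(r/12) ≤ W*V := by
      apply mul_le_mul hWlb hVlb (by positivity) (by linarith)
    calc Kb * 2 = 2*ρ/(W*V) := by rw [hKbdef]; ring
      _ ≤ 2*ρ/((ρ*r/91)*(r/12)) :=
          div_le_div_of_nonneg_left (by positivity) (by positivity) hprod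
      _ = 2184/r2 := by rw [← hrr]; field_simp; ring
      _ ≤ 2200/r2 := by rw [div_le_div_iff_of_pos_right hr20]; norm_num
  -- nonnegativity of each integral
  have hptw_nonneg : ∀ l ∈ Set.Icc (0:ℝ) 1, 0 ≤ g l := by
    intro l hl
    have h0 : (0:ℝ) ≤ l := hl.1
    rw [hgdef]
    have := Real.rpow_nonneg h0 (-(1:ℝ)/2)
    positivity
  have hNA : 0 ≤ (∫ l in (0:ℝ)..1, KA * (l ^ (-(1:ℝ)/2) * Real.exp (-(a0/2*l)))) := by
    apply intervalIntegral.integral_nonneg (by norm_num)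
    intro u hu
    have := Real.rpow_nonneg hu.1 (-(1:ℝ)/2)
    positivity
  have hNB : 0 ≤ (∫ l in (0:ℝ)..1, KB1 * (l ^ (-(1:ℝ)/2) * Real.exp (-(aS/2*l)))) := by
    apply intervalIntegral.integral_nonneg (by norm_num)
    intro u hu
    have := Real.rpow_nonneg hu.1 (-(1:ℝ)/2)
    positivity
  have hNC : 0 ≤ (∫ l in (0:ℝ)..1, 12 * ((l⁻¹)^2 * Real.exp (-(bp*l⁻¹)))) := by
    apply intervalIntegral.integral_nonneg (by norm_num)
    intro u hu
    positivity
  have hND : 0 ≤ (∫ l in (0:ℝ)..1, Kb * (l ^ (-(1:ℝ)/2))) := by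
    apply intervalIntegral.integral_nonneg (by norm_num)
    intro u hu
    have := Real.rpow_nonneg hu.1 (-(1:ℝ)/2)
    positivity
  have habs2 : |∫ l in (0:ℝ)..1, g l| ≤ 2000000/r2 := by
    rw [hsplit, abs_of_nonneg (by linarith)]
    have hs2 : (1536000:ℝ)/r2 + 40000/r2 + 25000/r2 + 2200/r2 ≤ 2000000/r2 := by
      rw [← add_div, ← add_div, ← add_div, div_le_div_iff_of_pos_right hr20]
      norm_num
    linarith only [hIA, hIB, hIC, hID, hNA, hNB, hNC, hND, hs2]
  have hfinal : (2000000:ℝ)/r2 = 2000000/|x-y|^2 := by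
    rw [← hrabs, hrr]
  calc ‖∫ l in (0:ℝ)..1, ((l ^ (-(1:ℝ)/2) : ℝ) : ℂ) * deriv (fun v => Kfun t x v l) y *
      Complex.exp (Complex.I * (Bfun t x y l : ℂ))‖ ≤ |∫ l in (0:ℝ)..1, g l| := hmain
    _ ≤ 2000000/r2 := habs2
    _ = 2000000/|x-y|^2 := hfinal
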